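/- For every integer 1 ≤ t ≤ n, T*_t is contained in the set Ĥ_t := {(τ, s) : 0 ≤ s ≤ t−1, τ ∈ T*_s}, where for s = 0 the only element of T*_0 is the empty vector and (∅, 0) is interpreted as the empty vector. Equivalently: every nonempty τ = (τ_1,…,τ_k) ∈ T*_t has the property that its prefix (τ_1,…,τ_{k−1}) lies in T*_{τ_k}, and if the empty vector is in T*_t it trivially lies in Ĥ_t. -/

import Mathlib

open Finset

/-- Segment cost `C(s,t,φ,ψ)`: cost of fitting data `y_{s+1:t}` with a linear
function taking value `φ` at time `s` and value `ψ` at time `t`. -/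
noncomputable def segCost (y : ℕ → ℝ) (σ : ℝ) (s t : ℕ) (φ ψ : ℝ) : ℝ :=
  (1 / σ ^ 2) * ∑ j ∈ Finset.Icc (s + 1) t,
    (y j - φ - ((ψ - φ) / ((t : ℝ) - (s : ℝ))) * ((j : ℝ) - (s : ℝ))) ^ 2

/-- `ValidCP t τ` : `τ` is a (possibly empty) strictly increasing vector of
changepoints `0 < τ₁ < ⋯ < τ_k < t`, i.e. an element of `T_t`. -/
def ValidCP (t : ℕ) (τ : List ℕ) : Prop :=
  τ.Chain' (· < ·) ∧ ∀ x ∈ τ, 0 < x ∧ x < t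

/-- Penalised cost of segmenting `y_{1:t}` with changepoints `τ = (τ₁,…,τ_k)`,
fitted values `φs 0, …, φs k` at times `0, τ₁, …, τ_k`, and fitted value `φ` at time `t`. -/
noncomputable def segTotal (y : ℕ → ℝ) (σ β : ℝ) (h : ℕ → ℝ) (t : ℕ)
    (τ : List ℕ) (φs : ℕ → ℝ) (φ : ℝ) : ℝ :=
  let p : ℕ → ℕ := fun i => (0 :: τ).getD i 0
  (∑ i ∈ Finset.range τ.length,
      (segCost y σ (p i) (p (i + 1)) (φs i) (φs (i + 1)) + h (p (i + 1) - p i)))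
    + segCost y σ (p τ.length) t (φs τ.length) φ + h (t - p τ.length)
    + β * ((τ.length : ℝ) + 1)

/-- `f_τ^t(φ)` : minimum penalised cost of segmenting `y_{1:t}` with changepoints `τ`
and fitted value `φ` at time `t`, minimised over the fitted values at the changepoints. -/
noncomputable def fseg (y : ℕ → ℝ) (σ β : ℝ) (h : ℕ → ℝ) (t : ℕ)
    (τ : List ℕ) (φ : ℝ) : ℝ :=
  ⨅ φs : ℕ → ℝ, segTotal y σ β h t τ φs φ

/-- `f^t(φ)` : minimum penalised cost of segmenting `y_{1:t}` with fitted value `φ`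
at time `t`, minimised over all changepoint vectors in `T_t`; `f^0 ≡ 0`. -/
noncomputable def fDP (y : ℕ → ℝ) (σ β : ℝ) (h : ℕ → ℝ) (t : ℕ) (φ : ℝ) : ℝ :=
  if t = 0 then 0 else ⨅ τ : {τ : List ℕ // ValidCP t τ}, fseg y σ β h t τ.1 φ

/-! Principle of optimality. Writing `τ = (ρ, s)`, the cost `f_τ^t(φ)` is the infimum over `ψ` of
`f_ρ^s(ψ) + C(s,t,ψ,φ) + h(t-s) + β`. By induction on `ρ`, each `f_ρ^s` is a quadratic polynomial
bounded below: minimising a bounded-below quadratic in two variables over one of them leaves a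
quadratic in the other, and the minimum is attained. So if `τ` is optimal at `φ`, the infimum
above is attained at some `ψ₀`, and comparing with the competitors `(ρ', s)`, `ρ' ∈ T_s`, gives
`f_ρ^s(ψ₀) ≤ f_{ρ'}^s(ψ₀)`: `ρ` is optimal at `ψ₀`. -/

def IsQuadratic (f : ℝ → ℝ) : Prop :=
  ∃ a b c : ℝ, ∀ x, f x = a * x ^ 2 + b * x + c

def IsQuadratic₂ (Q : ℝ → ℝ → ℝ) : Prop :=
  ∃ A B C D E F : ℝ, ∀ u v, Q u v = A * u ^ 2 + B * u * v + C * v ^ 2 + D * u + E * v + F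

/-- For `a = 0` (hence `b = 0`) the value is `c`, as `b ^ 2 / 0 = 0`. -/
theorem isLeast_range_quadratic {a b c m : ℝ} (hm : ∀ x, m ≤ a * x ^ 2 + b * x + c) :
    IsLeast (Set.range fun x => a * x ^ 2 + b * x + c) (c - b ^ 2 / (4 * a)) := by
  have hdisc : b ^ 2 - 4 * a * (c - m) ≤ 0 := by
    have := discrim_le_zero (a := a) (b := b) (c := c - m) fun x => by nlinarith [hm x]
    simpa [discrim] using this
  have hc : m ≤ c := by simpa using hm 0
  have ha : 0 ≤ a := by
    by_contra! ha
    nlinarith [hm 1, hm (-1), sq_nonneg b]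
  have hab : a = 0 → b = 0 := fun h0 => by subst h0; nlinarith [sq_nonneg b]
  refine ⟨⟨-b / (2 * a), ?_⟩, ?_⟩
  · rcases ha.eq_or_lt with h0 | h0
    · simp [← h0, hab h0.symm]
    · field_simp
      ring
  · rintro _ ⟨x, rfl⟩
    rcases ha.eq_or_lt with h0 | h0
    · simp [← h0, hab h0.symm]
    · have : -(a * x ^ 2 + b * x) ≤ b ^ 2 / (4 * a) := by
        rw [le_div_iff₀ (by positivity)]
        nlinarith [sq_nonneg (2 * a * x + b)]
      simp only
      linarith

theorem IsQuadratic₂.exists_isLeast {Q : ℝ → ℝ → ℝ} (hQ : IsQuadratic₂ Q) {m : ℝ}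
    (hm : ∀ u v, m ≤ Q u v) :
    ∃ g, IsQuadratic g ∧ ∀ v, IsLeast (Set.range fun u => Q u v) (g v) := by
  obtain ⟨A, B, C, D, E, F, hQ⟩ := hQ
  have hQv : ∀ v, (fun u => Q u v) =
      fun u => A * u ^ 2 + (B * v + D) * u + (C * v ^ 2 + E * v + F) :=
    fun v => funext fun u => by rw [hQ]; ring
  refine ⟨fun v => (C * v ^ 2 + E * v + F) - (B * v + D) ^ 2 / (4 * A),
    ⟨C - B ^ 2 / (4 * A), E - 2 * B * D / (4 * A), F - D ^ 2 / (4 * A), fun v => by ring⟩,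
    fun v => ?_⟩
  rw [hQv v]
  exact isLeast_range_quadratic fun u => (hm u v).trans_eq (by rw [hQ]; ring)

theorem validCP_iff {t : ℕ} {τ : List ℕ} :
    ValidCP t τ ↔ τ.Pairwise (· < ·) ∧ ∀ x ∈ τ, 0 < x ∧ x < t :=
  List.isChain_iff_pairwise.and Iff.rfl

theorem validCP_nil (t : ℕ) : ValidCP t [] := ⟨List.isChain_nil, by simp⟩

theorem validCP_append_singleton {t s : ℕ} {ρ : List ℕ} :
    ValidCP t (ρ ++ [s]) ↔ ValidCP s ρ ∧ 0 < s ∧ s < t := by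
  simp only [validCP_iff, List.pairwise_append, List.pairwise_singleton, List.mem_append,
    List.mem_singleton, true_and]
  constructor
  · rintro ⟨⟨hρ, hlt⟩, hmem⟩
    obtain ⟨hs, hst⟩ := hmem s (Or.inr rfl)
    exact ⟨⟨hρ, fun x hx => ⟨(hmem x (Or.inl hx)).1, hlt x hx s rfl⟩⟩, hs, hst⟩
  · rintro ⟨⟨hρ, hmem⟩, hs, hst⟩
    refine ⟨⟨hρ, fun x hx _ hb => hb ▸ (hmem x hx).2⟩, fun x hx => ?_⟩
    rcases hx with hx | rfl
    · exact ⟨(hmem x hx).1, (hmem x hx).2.trans hst⟩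
    · exact ⟨hs, hst⟩

instance finite_validCP (t : ℕ) : Finite {τ : List ℕ // ValidCP t τ} := by
  refine Set.Finite.to_subtype ((List.range t).sublists.toFinset.finite_toSet.subset fun τ hτ => ?_)
  obtain ⟨hpw, hmem⟩ := validCP_iff.mp hτ
  have hsub : τ ⊆ List.range t := fun x hx => List.mem_range.mpr (hmem x hx).2
  simpa using List.sublist_of_subperm_of_pairwise (List.subperm_of_subset hpw.nodup hsub) hpw
    List.pairwise_lt_range

section DynamicProgramming

variable (y : ℕ → ℝ) (σ β : ℝ) (h : ℕ → ℝ)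

theorem isQuadratic₂_segCost (r t : ℕ) :
    IsQuadratic₂ fun u v => segCost y σ r t u v := by
  set c : ℕ → ℝ := fun j => ((j : ℝ) - r) / ((t : ℝ) - r)
  set J := Icc (r + 1) t
  refine ⟨1 / σ ^ 2 * ∑ j ∈ J, (1 - c j) ^ 2, 1 / σ ^ 2 * ∑ j ∈ J, 2 * (1 - c j) * c j,
    1 / σ ^ 2 * ∑ j ∈ J, c j ^ 2, 1 / σ ^ 2 * ∑ j ∈ J, -2 * y j * (1 - c j),
    1 / σ ^ 2 * ∑ j ∈ J, -2 * y j * c j, 1 / σ ^ 2 * ∑ j ∈ J, y j ^ 2, fun u v => ?_⟩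
  have hexpand : ∀ j, (y j - u - (v - u) / ((t : ℝ) - r) * ((j : ℝ) - r)) ^ 2 =
      (1 - c j) ^ 2 * u ^ 2 + 2 * (1 - c j) * c j * (u * v) + c j ^ 2 * v ^ 2
        + -2 * y j * (1 - c j) * u + -2 * y j * c j * v + y j ^ 2 :=
    fun j => by simp only [c]; ring
  simp only [segCost, hexpand, sum_add_distrib, ← sum_mul]
  ring

theorem segCost_nonneg (s t : ℕ) (φ ψ : ℝ) : 0 ≤ segCost y σ s t φ ψ :=
  mul_nonneg (by positivity) (sum_nonneg fun _ _ => sq_nonneg _)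

theorem exists_isLeast_add_segCost {q : ℝ → ℝ} (hq : IsQuadratic q) {m : ℝ}
    (hm : ∀ u, m ≤ q u) (r t : ℕ) (k : ℝ) :
    ∃ g, IsQuadratic g ∧ ∀ φ, IsLeast (Set.range fun u => q u + segCost y σ r t u φ + k) (g φ) := by
  obtain ⟨a, b, c, hq⟩ := hq
  obtain ⟨A, B, C, D, E, F, hcost⟩ := isQuadratic₂_segCost y σ r t
  refine IsQuadratic₂.exists_isLeast (m := m + k)
    ⟨a + A, B, C, b + D, E, c + F + k, fun u φ => ?_⟩ fun u φ => ?_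
  · beta_reduce at hcost ⊢
    rw [hq, hcost]
    ring
  · linarith [hm u, segCost_nonneg y σ r t u φ]

theorem segTotal_nil (t : ℕ) (φs : ℕ → ℝ) (φ : ℝ) :
    segTotal y σ β h t [] φs φ = segCost y σ 0 t (φs 0) φ + (h t + β) := by
  simp [segTotal, add_assoc]

theorem segTotal_append_singleton (ρ : List ℕ) (s t : ℕ) (φs : ℕ → ℝ) (φ : ℝ) :
    segTotal y σ β h t (ρ ++ [s]) φs φ =
      segTotal y σ β h s ρ φs (φs (ρ.length + 1))
        + segCost y σ s t (φs (ρ.length + 1)) φ + (h (t - s) + β) := by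
  have hprefix : ∀ i ≤ ρ.length, (0 :: (ρ ++ [s])).getD i 0 = (0 :: ρ).getD i 0 :=
    fun i hi => by rw [← List.cons_append, List.getD_append _ _ _ _ (by simp; omega)]
  have hlast : (0 :: (ρ ++ [s])).getD (ρ.length + 1) 0 = s := by
    rw [← List.cons_append, List.getD_append_right _ _ _ _ (by simp)]
    simp
  simp only [segTotal, List.length_append, List.length_singleton, sum_range_succ, hlast,
    hprefix _ le_rfl]
  rw [sum_congr rfl fun i hi => by rw [hprefix i (mem_range.mp hi).le,
    hprefix (i + 1) (mem_range.mp hi)]]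
  push_cast
  ring

theorem segTotal_congr (t : ℕ) (ρ : List ℕ) {φs φs' : ℕ → ℝ} (φ : ℝ)
    (hφs : ∀ i ≤ ρ.length, φs i = φs' i) :
    segTotal y σ β h t ρ φs φ = segTotal y σ β h t ρ φs' φ := by
  simp only [segTotal, hφs ρ.length le_rfl]
  rw [sum_congr rfl fun i hi => by rw [hφs i (mem_range.mp hi).le, hφs (i + 1) (mem_range.mp hi)]]

theorem exists_forall_le_segTotal (t : ℕ) (ρ : List ℕ) :
    ∃ m, ∀ φs φ, m ≤ segTotal y σ β h t ρ φs φ := by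
  let p : ℕ → ℕ := fun i => (0 :: ρ).getD i 0
  refine ⟨∑ i ∈ range ρ.length, h (p (i + 1) - p i) + h (t - p ρ.length)
    + β * (ρ.length + 1), fun φs φ => ?_⟩
  have hsum : ∑ i ∈ range ρ.length, h (p (i + 1) - p i) ≤ ∑ i ∈ range ρ.length,
      (segCost y σ (p i) (p (i + 1)) (φs i) (φs (i + 1)) + h (p (i + 1) - p i)) :=
    sum_le_sum fun i _ => le_add_of_nonneg_left (segCost_nonneg y σ _ _ _ _)
  have := segCost_nonneg y σ (p ρ.length) t (φs ρ.length) φ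
  simp only [segTotal]
  linarith

theorem fseg_le_segTotal (t : ℕ) (ρ : List ℕ) (φs : ℕ → ℝ) (φ : ℝ) :
    fseg y σ β h t ρ φ ≤ segTotal y σ β h t ρ φs φ := by
  obtain ⟨m, hm⟩ := exists_forall_le_segTotal y σ β h t ρ
  exact ciInf_le ⟨m, by rintro _ ⟨φs, rfl⟩; exact hm φs φ⟩ φs

theorem exists_forall_le_fseg (t : ℕ) (ρ : List ℕ) : ∃ m, ∀ φ, m ≤ fseg y σ β h t ρ φ := by
  obtain ⟨m, hm⟩ := exists_forall_le_segTotal y σ β h t ρ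
  exact ⟨m, fun φ => le_ciInf fun φs => hm φs φ⟩

theorem fseg_nil (t : ℕ) (φ : ℝ) :
    fseg y σ β h t [] φ = ⨅ u, segCost y σ 0 t u φ + (h t + β) := by
  simp only [fseg, segTotal_nil]
  exact Function.Surjective.iInf_comp (fun u => ⟨fun _ => u, rfl⟩)
    fun u => segCost y σ 0 t u φ + (h t + β)

theorem fseg_append_singleton_le (ρ : List ℕ) (s t : ℕ) (φ u : ℝ) :
    fseg y σ β h t (ρ ++ [s]) φ ≤ fseg y σ β h s ρ u + segCost y σ s t u φ + (h (t - s) + β) := by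
  have key : ∀ χ : ℕ → ℝ, fseg y σ β h t (ρ ++ [s]) φ ≤
      segTotal y σ β h s ρ χ u + segCost y σ s t u φ + (h (t - s) + β) := fun χ => by
    have hagree : ∀ i ≤ ρ.length, Function.update χ (ρ.length + 1) u i = χ i :=
      fun i hi => Function.update_of_ne (by omega) _ _
    calc fseg y σ β h t (ρ ++ [s]) φ
        ≤ segTotal y σ β h t (ρ ++ [s]) (Function.update χ (ρ.length + 1) u) φ :=
          fseg_le_segTotal y σ β h t _ _ φ
      _ = _ := by
          rw [segTotal_append_singleton, Function.update_self, segTotal_congr y σ β h s ρ u hagree]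
  have : fseg y σ β h t (ρ ++ [s]) φ - (segCost y σ s t u φ + (h (t - s) + β)) ≤
      fseg y σ β h s ρ u :=
    le_ciInf fun χ => by linarith [key χ]
  linarith

theorem fseg_append_singleton (ρ : List ℕ) (s t : ℕ) (φ : ℝ) :
    fseg y σ β h t (ρ ++ [s]) φ =
      ⨅ u, fseg y σ β h s ρ u + segCost y σ s t u φ + (h (t - s) + β) := by
  obtain ⟨m, hm⟩ := exists_forall_le_fseg y σ β h s ρ
  have hbdd : BddBelow (Set.range fun u =>
      fseg y σ β h s ρ u + segCost y σ s t u φ + (h (t - s) + β)) := by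
    refine ⟨m + (h (t - s) + β), ?_⟩
    rintro _ ⟨u, rfl⟩
    linarith [hm u, segCost_nonneg y σ s t u φ]
  refine le_antisymm (le_ciInf fun u => fseg_append_singleton_le y σ β h ρ s t φ u)
    (le_ciInf fun φs => ?_)
  calc ⨅ u, fseg y σ β h s ρ u + segCost y σ s t u φ + (h (t - s) + β)
      ≤ fseg y σ β h s ρ (φs (ρ.length + 1)) + segCost y σ s t (φs (ρ.length + 1)) φ
          + (h (t - s) + β) := ciInf_le hbdd _
    _ ≤ segTotal y σ β h s ρ φs (φs (ρ.length + 1)) + segCost y σ s t (φs (ρ.length + 1)) φ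
          + (h (t - s) + β) := by gcongr; exact fseg_le_segTotal y σ β h s ρ φs _
    _ = segTotal y σ β h t (ρ ++ [s]) φs φ := (segTotal_append_singleton y σ β h ρ s t φs φ).symm

theorem isQuadratic_fseg (ρ : List ℕ) (t : ℕ) : IsQuadratic (fseg y σ β h t ρ) := by
  induction ρ using List.reverseRecOn generalizing t with
  | nil =>
    obtain ⟨g, hg, hleast⟩ := exists_isLeast_add_segCost y σ (q := fun _ => 0)
      ⟨0, 0, 0, fun _ => by ring⟩ (m := 0) (fun _ => le_rfl) 0 t (h t + β)
    convert hg using 1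
    funext φ
    rw [fseg_nil, ← (hleast φ).isGLB.ciInf_eq]
    simp
  | append_singleton ρ s ih =>
    obtain ⟨m, hm⟩ := exists_forall_le_fseg y σ β h s ρ
    obtain ⟨g, hg, hleast⟩ := exists_isLeast_add_segCost y σ (ih s) hm s t (h (t - s) + β)
    convert hg using 1
    funext φ
    rw [fseg_append_singleton, (hleast φ).isGLB.ciInf_eq]

theorem fDP_le_fseg {t : ℕ} (ht : t ≠ 0) {ρ : List ℕ} (hρ : ValidCP t ρ) (φ : ℝ) :
    fDP y σ β h t φ ≤ fseg y σ β h t ρ φ := by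
  rw [fDP, if_neg ht]
  exact ciInf_le (Set.finite_range fun τ : {τ // ValidCP t τ} => fseg y σ β h t τ.1 φ).bddBelow
    ⟨ρ, hρ⟩

theorem exists_fDP_eq_fseg_of_append_singleton {t s : ℕ} {ρ : List ℕ}
    (hρs : ValidCP t (ρ ++ [s])) (hopt : ∃ φ, fDP y σ β h t φ = fseg y σ β h t (ρ ++ [s]) φ) :
    ∃ ψ, fDP y σ β h s ψ = fseg y σ β h s ρ ψ := by
  obtain ⟨hρ, hs, hst⟩ := validCP_append_singleton.mp hρs
  obtain ⟨φ, hφ⟩ := hopt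
  obtain ⟨m, hm⟩ := exists_forall_le_fseg y σ β h s ρ
  obtain ⟨g, -, hleast⟩ :=
    exists_isLeast_add_segCost y σ (isQuadratic_fseg y σ β h ρ s) hm s t (h (t - s) + β)
  obtain ⟨ψ, hψ⟩ := (hleast φ).1
  have hsplit : fseg y σ β h t (ρ ++ [s]) φ =
      fseg y σ β h s ρ ψ + segCost y σ s t ψ φ + (h (t - s) + β) := by
    rw [fseg_append_singleton, (hleast φ).isGLB.ciInf_eq, ← hψ]
  refine ⟨ψ, le_antisymm (fDP_le_fseg y σ β h hs.ne' hρ ψ) ?_⟩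
  rw [fDP, if_neg hs.ne']
  have : Nonempty {ρ' : List ℕ // ValidCP s ρ'} := ⟨⟨[], validCP_nil s⟩⟩
  refine le_ciInf fun ⟨ρ', hρ'⟩ => ?_
  calc fseg y σ β h s ρ ψ
      = fDP y σ β h t φ - (segCost y σ s t ψ φ + (h (t - s) + β)) := by rw [hφ, hsplit]; ring
    _ ≤ fseg y σ β h t (ρ' ++ [s]) φ - (segCost y σ s t ψ φ + (h (t - s) + β)) := by
        gcongr
        exact fDP_le_fseg y σ β h (by omega) (validCP_append_singleton.mpr ⟨hρ', hs, hst⟩) φ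
    _ ≤ fseg y σ β h s ρ' ψ := by linarith [fseg_append_singleton_le y σ β h ρ' s t φ ψ]

end DynamicProgramming

theorem statement1_general (y : ℕ → ℝ) (σ : ℝ)
    (β : ℝ) (h : ℕ → ℝ)
    (t : ℕ)
    (τ : List ℕ) (hτ : ValidCP t τ) (hne : τ ≠ [])
    (hopt : ∃ φ : ℝ, fDP y σ β h t φ = fseg y σ β h t τ φ) :
    ∃ φ : ℝ, fDP y σ β h (τ.getLast hne) φ
      = fseg y σ β h (τ.getLast hne) τ.dropLast φ := by
  rw [← List.dropLast_append_getLast hne] at hτ hopt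
  exact exists_fDP_eq_fseg_of_append_singleton y σ β h hτ hopt

/-- every nonempty functionally optimal changepoint vector
`τ = (τ₁,…,τ_k) ∈ T*_t` has its prefix `(τ₁,…,τ_{k-1})` functionally optimal at
time `τ_k`; equivalently `T*_t ⊆ Ĥ_t = {(τ,s) : 0 ≤ s ≤ t-1, τ ∈ T*_s}`. -/
theorem statement1 (n : ℕ) (hn : 1 ≤ n) (y : ℕ → ℝ) (σ : ℝ) (hσ : 0 < σ)
    (β : ℝ) (hβ : 0 < β) (h : ℕ → ℝ)
    (t : ℕ) (ht1 : 1 ≤ t) (htn : t ≤ n)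
    (τ : List ℕ) (hτ : ValidCP t τ) (hne : τ ≠ [])
    (hopt : ∃ φ : ℝ, fDP y σ β h t φ = fseg y σ β h t τ φ) :
    ∃ φ : ℝ, fDP y σ β h (τ.getLast hne) φ
      = fseg y σ β h (τ.getLast hne) τ.dropLast φ :=
  statement1_general y σ β h t τ hτ hne hopt
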